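/- arXiv:2503.01282 — 4 statements merged into one kernel-verified Lean document; each statement's English description precedes it below -/
import Mathlib

section
/- Corollary (time-invariant steady-state case). Under the hypotheses of Theorem 1, if additionally the matrices P_k are constant, i.e., P_k⁻¹ = P_0⁻¹ for all k ≥ 0 (as happens for the steady-state Kalman filter with C_k ≡ C_0), then assumption A2 holds with M = 0, and consequently the regret bounds hold with M = 0: R_f(N) ≤ (√N · D_ν)/2 + G_f D_x √N / √(2α) + G_f √N D_x / √(2α) and R_c(N) ≤ 2F√N + D_ν + (2G_f D_x) / √(2α), for η = G_f √N / (D_x √(2α)) and ρ = √N. -/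
open Finset Matrix
open scoped RealInnerProductSpace

/-- Action of a matrix on a Euclidean vector. -/
noncomputable def act {ι κ : Type*} [Fintype ι] [Fintype κ] (A : Matrix ι κ ℝ)
    (v : EuclideanSpace ℝ κ) : EuclideanSpace ℝ ι :=
  WithLp.toLp 2 (A.mulVec v)

/-- Weighted squared norm `‖v‖²_M = vᵀ M v`. -/
noncomputable def qnorm {ι : Type*} [Fintype ι] (M : Matrix ι ι ℝ)
    (v : EuclideanSpace ℝ ι) : ℝ :=
  ⟪v, act M v⟫

/-!
With `P` constant, the drift terms of assumption A2 vanish and the Lyapunov function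
`Φ_k = ‖w_k‖²/(2ρ) + (ρ/2)‖x⋆ - ν_k‖² + (η/2)‖x⋆ - x_k‖²_P` telescopes. Each ADMM subproblem
minimizes a convex function plus a quadratic, so its minimizer beats any competitor by the
curvature of that quadratic (three-point inequality). Comparing both steps with `x⋆ = ν⋆` and
using the dual update bounds the step's loss plus the residual `(ρ/2)‖x_{k+1} - ν_k‖²` by
`Φ_k - Φ_{k+1}`. Linearizing `f_k` at `x_k` (gradient bounded by `G_f`, Young's inequality
with weight `ηα`) costs `G_f²/(2ηα)` per step; summing, `ρ = √N` and `η ∝ √N` balance the terms.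
-/

section QuadraticAlong

variable {E F : Type*} [AddCommGroup E] [Module ℝ E] [AddCommGroup F] [Module ℝ F]

def QuadraticAlong (q : E → ℝ) (X d : E) (c : ℝ) : Prop :=
  ∃ ℓ : ℝ, ∀ t : ℝ, q (X + t • d) = q X + ℓ * t + c * t ^ 2

namespace QuadraticAlong

variable {q r : E → ℝ} {X d : E} {c c' : ℝ}

theorem add (hq : QuadraticAlong q X d c) (hr : QuadraticAlong r X d c') :
    QuadraticAlong (fun u => q u + r u) X d (c + c') := by
  obtain ⟨ℓ, hℓ⟩ := hq
  obtain ⟨ℓ', hℓ'⟩ := hr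
  exact ⟨ℓ + ℓ', fun t => by simp only [hℓ, hℓ']; ring⟩

theorem const_mul (hq : QuadraticAlong q X d c) (a : ℝ) :
    QuadraticAlong (fun u => a * q u) X d (a * c) := by
  obtain ⟨ℓ, hℓ⟩ := hq
  exact ⟨a * ℓ, fun t => by simp only [hℓ]; ring⟩

theorem comp {φ : F → ℝ} {A : E → F} {e : F} (hφ : QuadraticAlong φ (A X) e c)
    (hA : ∀ t : ℝ, A (X + t • d) = A X + t • e) :
    QuadraticAlong (fun u => φ (A u)) X d c := by
  obtain ⟨ℓ, hℓ⟩ := hφ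
  exact ⟨ℓ, fun t => by simp only [hA, hℓ]⟩

end QuadraticAlong

open Filter Topology in
theorem nonneg_of_forall_mul_add_mul_sq_nonneg {a b : ℝ}
    (h : ∀ t ∈ Set.Ioc (0 : ℝ) 1, 0 ≤ a * t + b * t ^ 2) : 0 ≤ a := by
  have hlim : Tendsto (fun t => a + b * t) (𝓝[>] 0) (𝓝 a) := by
    have : Continuous fun t : ℝ => a + b * t := by fun_prop
    simpa using (this.tendsto 0).mono_left nhdsWithin_le_nhds
  refine ge_of_tendsto hlim ?_
  filter_upwards [Ioc_mem_nhdsGT one_pos] with t ht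
  exact nonneg_of_mul_nonneg_right (by linarith [h t ht]) ht.1

/-- Three-point inequality: the minimality of `X` forces the slope of `h + q` from `X` towards
`z` to be nonnegative, and the curvature `c` of `q` is then gained on top of it. -/
theorem ConvexOn.add_le_of_forall_le_of_quadraticAlong {h q : E → ℝ}
    (hh : ConvexOn ℝ Set.univ h) {X z : E} {c : ℝ} (hq : QuadraticAlong q X (z - X) c)
    (hmin : ∀ u, h X + q X ≤ h u + q u) : h X + q X + c ≤ h z + q z := by
  obtain ⟨ℓ, hℓ⟩ := hq
  have hslope : 0 ≤ h z - h X + ℓ := by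
    refine nonneg_of_forall_mul_add_mul_sq_nonneg (b := c) fun t ht => ?_
    have hconv : h (X + t • (z - X)) ≤ (1 - t) * h X + t * h z := by
      have := hh.2 (Set.mem_univ X) (Set.mem_univ z) (sub_nonneg.2 ht.2) ht.1.le (by ring)
      rwa [show (1 - t) • X + t • z = X + t • (z - X) by module] at this
    linarith [hmin (X + t • (z - X)), hℓ t]
  have hz := hℓ 1
  rw [one_smul, add_sub_cancel] at hz
  linarith

theorem QuadraticAlong.add_le_of_forall_le {q : E → ℝ} {X z : E} {c : ℝ}
    (hq : QuadraticAlong q X (z - X) c) (hmin : ∀ u, q X ≤ q u) : q X + c ≤ q z := by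
  simpa using (convexOn_const (0 : ℝ) convex_univ).add_le_of_forall_le_of_quadraticAlong hq
    (by simpa using hmin)

end QuadraticAlong

section InnerProductSpace

variable {E : Type*} [NormedAddCommGroup E] [InnerProductSpace ℝ E]

theorem quadraticAlong_inner (w X d : E) : QuadraticAlong (fun u => ⟪w, u⟫) X d 0 :=
  ⟨⟪w, d⟫, fun t => by simp only [inner_add_right, real_inner_smul_right]; ring⟩

theorem LinearMap.IsSymmetric.inner_add_apply_add {T : E →ₗ[ℝ] E} (hT : T.IsSymmetric)
    (a b : E) : ⟪a + b, T (a + b)⟫ = ⟪a, T a⟫ + 2 * ⟪T a, b⟫ + ⟪b, T b⟫ := by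
  rw [map_add, inner_add_left, inner_add_right, inner_add_right, ← hT a b,
    real_inner_comm b (T a)]
  ring

theorem LinearMap.IsSymmetric.quadraticAlong_inner_apply {T : E →ₗ[ℝ] E} (hT : T.IsSymmetric)
    (X d : E) : QuadraticAlong (fun u => ⟪u, T u⟫) X d ⟪d, T d⟫ :=
  ⟨2 * ⟪T X, d⟫, fun t => by
    simp only [hT.inner_add_apply_add, map_smul, real_inner_smul_right, real_inner_smul_left,
      real_inner_smul_right]
    ring⟩

theorem quadraticAlong_norm_sq (X d : E) :
    QuadraticAlong (fun u => ‖u‖ ^ 2) X d (‖d‖ ^ 2) := by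
  simpa only [LinearMap.id_apply, real_inner_self_eq_norm_sq] using
    LinearMap.IsSymmetric.id.quadraticAlong_inner_apply X d

theorem real_inner_le_norm_sq_div_add (u v : E) {ε : ℝ} (hε : 0 < ε) :
    ⟪u, v⟫ ≤ ‖u‖ ^ 2 / (2 * ε) + ε / 2 * ‖v‖ ^ 2 := by
  have h := div_nonneg (sq_nonneg ‖u - ε • v‖) (by positivity : (0 : ℝ) ≤ 2 * ε)
  rw [norm_sub_sq_real, real_inner_smul_right, norm_smul, Real.norm_of_nonneg hε.le] at h
  have expand : (‖u‖ ^ 2 - 2 * (ε * ⟪u, v⟫) + (ε * ‖v‖) ^ 2) / (2 * ε)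
      = ‖u‖ ^ 2 / (2 * ε) + ε / 2 * ‖v‖ ^ 2 - ⟪u, v⟫ := by
    field_simp
    ring
  linarith

theorem norm_add_smul_sq_div (w r : E) {ρ : ℝ} (hρ : ρ ≠ 0) :
    ‖w + ρ • r‖ ^ 2 / (2 * ρ) = ‖w‖ ^ 2 / (2 * ρ) + ⟪w, r⟫ + ρ / 2 * ‖r‖ ^ 2 := by
  rw [norm_add_sq_real, real_inner_smul_right, norm_smul, mul_pow, Real.norm_eq_abs, sq_abs]
  field_simp

end InnerProductSpace

section MatrixForms

variable {ι κ : Type*} [Fintype ι] [Fintype κ]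

theorem act_eq_toEuclideanLin [DecidableEq κ] (A : Matrix ι κ ℝ) :
    act A = toEuclideanLin A := rfl

theorem inner_act_transpose (A : Matrix ι κ ℝ) (u : EuclideanSpace ℝ ι)
    (v : EuclideanSpace ℝ κ) : ⟪act Aᵀ u, v⟫ = ⟪u, act A v⟫ := by
  classical
  rw [act_eq_toEuclideanLin, act_eq_toEuclideanLin, ← conjTranspose_eq_transpose_of_trivial,
    toEuclideanLin_conjTranspose_eq_adjoint, LinearMap.adjoint_inner_left]

theorem act_mul {μ : Type*} [Fintype μ] (A : Matrix ι κ ℝ) (B : Matrix κ μ ℝ)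
    (v : EuclideanSpace ℝ μ) : act (A * B) v = act A (act B v) := by
  classical
  simp only [act_eq_toEuclideanLin, toLpLin_mul_same, LinearMap.comp_apply]

theorem qnorm_nonneg {M : Matrix ι ι ℝ} (hM : M.PosSemidef) (v : EuclideanSpace ℝ ι) :
    0 ≤ qnorm M v := by
  classical
  exact (isPositive_toEuclideanLin_iff.2 hM).inner_nonneg_right v

theorem qnorm_zero (v : EuclideanSpace ℝ ι) : qnorm (0 : Matrix ι ι ℝ) v = 0 := by
  simp [qnorm, act]

theorem Matrix.IsHermitian.qnorm_add {M : Matrix ι ι ℝ} (hM : M.IsHermitian)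
    (a b : EuclideanSpace ℝ ι) : qnorm M (a + b) = qnorm M a + 2 * ⟪act M a, b⟫ + qnorm M b := by
  classical
  exact (isSymmetric_toEuclideanLin_iff.2 hM).inner_add_apply_add a b

theorem Matrix.IsHermitian.quadraticAlong_qnorm {M : Matrix ι ι ℝ} (hM : M.IsHermitian)
    (X d : EuclideanSpace ℝ ι) : QuadraticAlong (qnorm M) X d (qnorm M d) := by
  classical
  exact (isSymmetric_toEuclideanLin_iff.2 hM).quadraticAlong_inner_apply X d

end MatrixForms

section LeastSquares

variable {ι κ : Type*} [Fintype ι] [Fintype κ]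

noncomputable def lsqLoss (R : Matrix ι ι ℝ) (C : Matrix ι κ ℝ) (y : EuclideanSpace ℝ ι)
    (x : EuclideanSpace ℝ κ) : ℝ :=
  1 / 2 * qnorm R (y - act C x)

variable {R : Matrix ι ι ℝ} (C : Matrix ι κ ℝ) (y : EuclideanSpace ℝ ι)

theorem Matrix.IsHermitian.quadraticAlong_lsqLoss (hR : R.IsHermitian) (X d : EuclideanSpace ℝ κ) :
    QuadraticAlong (lsqLoss R C y) X d (1 / 2 * qnorm R (-act C d)) := by
  classical
  refine ((hR.quadraticAlong_qnorm _ _).comp fun t => ?_).const_mul (1 / 2)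
  simp only [act_eq_toEuclideanLin, map_add, map_smul, smul_neg]
  abel

theorem lsqLoss_add_inner_le (hR : R.PosSemidef) (x δ : EuclideanSpace ℝ κ) :
    lsqLoss R C y x + ⟪act (Cᵀ * R) (act C x - y), δ⟫ ≤ lsqLoss R C y (x + δ) := by
  classical
  have hexpand : y - act C (x + δ) = (y - act C x) + -act C δ := by
    simp only [act_eq_toEuclideanLin, map_add]; abel
  have hgrad : ⟪act (Cᵀ * R) (act C x - y), δ⟫ = ⟪act R (y - act C x), -act C δ⟫ := by
    rw [act_mul, inner_act_transpose, inner_neg_right, ← inner_neg_left, act_eq_toEuclideanLin,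
      ← map_neg, neg_sub]
  unfold lsqLoss
  rw [hexpand, hR.isHermitian.qnorm_add, hgrad]
  linarith [qnorm_nonneg hR (-act C δ)]

theorem lsqLoss_le_add (hR : R.PosSemidef) {x : EuclideanSpace ℝ κ} {G ε : ℝ} (hε : 0 < ε)
    (hG : ‖act (Cᵀ * R) (act C x - y)‖ ^ 2 ≤ G ^ 2) (x' : EuclideanSpace ℝ κ) :
    lsqLoss R C y x ≤ lsqLoss R C y x' + G ^ 2 / (2 * ε) + ε / 2 * ‖x' - x‖ ^ 2 := by
  have hlin := lsqLoss_add_inner_le C y hR x (x' - x)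
  rw [add_sub_cancel] at hlin
  have hyoung := real_inner_le_norm_sq_div_add (-act (Cᵀ * R) (act C x - y)) (x' - x) hε
  rw [inner_neg_left, norm_neg] at hyoung
  have hG' := div_le_div_of_nonneg_right hG (by positivity : (0 : ℝ) ≤ 2 * ε)
  linarith

end LeastSquares

theorem Finset.sum_range_le_of_le_sub_succ_add {a Φ : ℕ → ℝ} {c : ℝ} {N : ℕ}
    (h : ∀ k < N, a k ≤ Φ k - Φ (k + 1) + c) (hΦ : 0 ≤ Φ N) :
    ∑ k ∈ range N, a k ≤ Φ 0 + N * c := by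
  calc ∑ k ∈ range N, a k ≤ ∑ k ∈ range N, (Φ k - Φ (k + 1) + c) :=
        sum_le_sum fun k hk => h k (mem_range.1 hk)
    _ = Φ 0 - Φ N + N * c := by
        rw [sum_add_distrib, sum_range_sub', sum_const, card_range, nsmul_eq_mul]
    _ ≤ Φ 0 + N * c := by linarith

section OnlineADMM

variable {ι κ : Type*} [Fintype ι] [Fintype κ]

noncomputable def admmPotential (ρ η : ℝ) (P : Matrix κ κ ℝ) (xs w ν x : EuclideanSpace ℝ κ) : ℝ :=
  ‖w‖ ^ 2 / (2 * ρ) + ρ / 2 * ‖xs - ν‖ ^ 2 + η / 2 * qnorm P (xs - x)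

theorem admmPotential_nonneg {ρ η : ℝ} (hρ : 0 ≤ ρ) (hη : 0 ≤ η) {P : Matrix κ κ ℝ}
    (hP : P.PosSemidef) (xs w ν x : EuclideanSpace ℝ κ) : 0 ≤ admmPotential ρ η P xs w ν x := by
  have := qnorm_nonneg hP (xs - x)
  unfold admmPotential
  positivity

theorem admm_step_le {R : Matrix ι ι ℝ} (hR : R.PosSemidef) (C : Matrix ι κ ℝ)
    (y : EuclideanSpace ℝ ι) {g : EuclideanSpace ℝ κ → ℝ} (hg : ConvexOn ℝ Set.univ g)
    {P : Matrix κ κ ℝ} (hP : P.IsHermitian) {ρ η : ℝ} (hρ : ρ ≠ 0)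
    {x ν w x' ν' w' : EuclideanSpace ℝ κ}
    (hx : ∀ z, lsqLoss R C y x' + ⟪w, x' - ν⟫ + ρ / 2 * ‖x' - ν‖ ^ 2 + η / 2 * qnorm P (x' - x)
      ≤ lsqLoss R C y z + ⟪w, z - ν⟫ + ρ / 2 * ‖z - ν‖ ^ 2 + η / 2 * qnorm P (z - x))
    (hν : ∀ z, g ν' + ⟪w, x' - ν'⟫ + ρ / 2 * ‖x' - ν'‖ ^ 2
      ≤ g z + ⟪w, x' - z⟫ + ρ / 2 * ‖x' - z‖ ^ 2)
    (hw : w' = w + ρ • (x' - ν')) (xs : EuclideanSpace ℝ κ) :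
    lsqLoss R C y x' + g ν' - (lsqLoss R C y xs + g xs) + ρ / 2 * ‖x' - ν‖ ^ 2
        + η / 2 * qnorm P (x' - x)
      ≤ admmPotential ρ η P xs w ν x - admmPotential ρ η P xs w' ν' x' := by
  have hshift : ∀ (a : EuclideanSpace ℝ κ) (t : ℝ),
      x' + t • (xs - x') - a = (x' - a) + t • (xs - x') := fun a t =>
    add_sub_right_comm _ _ _
  have hxq : QuadraticAlong (fun u => lsqLoss R C y u + ⟪w, u - ν⟫ + ρ / 2 * ‖u - ν‖ ^ 2
      + η / 2 * qnorm P (u - x)) x' (xs - x')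
      (1 / 2 * qnorm R (-act C (xs - x')) + 0 + ρ / 2 * ‖xs - x'‖ ^ 2
        + η / 2 * qnorm P (xs - x')) :=
    (((hR.isHermitian.quadraticAlong_lsqLoss C y x' (xs - x')).add
      ((quadraticAlong_inner w _ _).comp (hshift ν))).add
      (((quadraticAlong_norm_sq _ _).comp (hshift ν)).const_mul (ρ / 2))).add
      (((hP.quadraticAlong_qnorm _ _).comp (hshift x)).const_mul (η / 2))
  have hxmin := hxq.add_le_of_forall_le hx
  have hreflect : ∀ t : ℝ, x' - (ν' + t • (xs - ν')) = (x' - ν') + t • -(xs - ν') := fun t => by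
    rw [smul_neg]; abel
  have hνq : QuadraticAlong (fun u => ⟪w, x' - u⟫ + ρ / 2 * ‖x' - u‖ ^ 2) ν' (xs - ν')
      (0 + ρ / 2 * ‖-(xs - ν')‖ ^ 2) :=
    ((quadraticAlong_inner w _ _).comp hreflect).add
      (((quadraticAlong_norm_sq _ _).comp hreflect).const_mul (ρ / 2))
  have hνmin := hg.add_le_of_forall_le_of_quadraticAlong hνq
    (fun u => by simpa only [add_assoc] using hν u)
  beta_reduce at hxmin hνmin
  have hdual := norm_add_smul_sq_div w (x' - ν') hρ
  rw [← hw] at hdual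
  have hcurv := qnorm_nonneg hR (-act C (xs - x'))
  rw [norm_neg, norm_sub_rev x' xs] at hνmin
  unfold admmPotential
  simp only [inner_sub_right] at hxmin hνmin hdual
  linarith

theorem admm_regret_and_violation_le {N : ℕ} {C : ℕ → Matrix ι κ ℝ} {R : ℕ → Matrix ι ι ℝ}
    {y : ℕ → EuclideanSpace ℝ ι} (hR : ∀ k, (R k).PosSemidef)
    {g : EuclideanSpace ℝ κ → ℝ} (hg : ConvexOn ℝ Set.univ g)
    {P : Matrix κ κ ℝ} (hP : P.PosSemidef) {ρ η α G F : ℝ} (hρ : 0 < ρ) (hη : 0 < η)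
    (hα : 0 < α) {x ν w : ℕ → EuclideanSpace ℝ κ}
    (hx : ∀ k z, lsqLoss (R k) (C k) (y k) (x (k + 1)) + ⟪w k, x (k + 1) - ν k⟫
        + ρ / 2 * ‖x (k + 1) - ν k‖ ^ 2 + η / 2 * qnorm P (x (k + 1) - x k)
      ≤ lsqLoss (R k) (C k) (y k) z + ⟪w k, z - ν k⟫ + ρ / 2 * ‖z - ν k‖ ^ 2
        + η / 2 * qnorm P (z - x k))
    (hν : ∀ k z, g (ν (k + 1)) + ⟪w k, x (k + 1) - ν (k + 1)⟫
        + ρ / 2 * ‖x (k + 1) - ν (k + 1)‖ ^ 2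
      ≤ g z + ⟪w k, x (k + 1) - z⟫ + ρ / 2 * ‖x (k + 1) - z‖ ^ 2)
    (hw : ∀ k, w (k + 1) = w k + ρ • (x (k + 1) - ν (k + 1))) (xs : EuclideanSpace ℝ κ)
    (hPα : ∀ v, α * ‖v‖ ^ 2 ≤ qnorm P v)
    (hG : ∀ k, ‖act ((C k)ᵀ * R k) (act (C k) (x k) - y k)‖ ^ 2 ≤ G ^ 2)
    (hF : ∀ k, -F ≤ lsqLoss (R k) (C k) (y k) (x (k + 1)) + g (ν (k + 1))
      - (lsqLoss (R k) (C k) (y k) xs + g xs)) :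
    (∑ k ∈ range N, (lsqLoss (R k) (C k) (y k) (x k) + g (ν k)))
        - ∑ k ∈ range N, (lsqLoss (R k) (C k) (y k) xs + g xs)
      ≤ admmPotential ρ η P xs (w 0) (ν 0) (x 0) + N * (G ^ 2 / (2 * (η * α)))
        + (g (ν 0) - g (ν N)) ∧
    ρ / 2 * ∑ k ∈ range N, ‖x (k + 1) - ν k‖ ^ 2
      ≤ admmPotential ρ η P xs (w 0) (ν 0) (x 0) + N * F := by
  have hstep k := admm_step_le (hR k) (C k) (y k) hg hP.isHermitian hρ.ne' (hx k) (hν k) (hw k) xs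
  have hΦN := admmPotential_nonneg hρ.le hη.le hP xs (w N) (ν N) (x N)
  constructor
  · have hkey : ∀ k < N, lsqLoss (R k) (C k) (y k) (x k) + g (ν (k + 1))
          - (lsqLoss (R k) (C k) (y k) xs + g xs)
        ≤ admmPotential ρ η P xs (w k) (ν k) (x k)
          - admmPotential ρ η P xs (w (k + 1)) (ν (k + 1)) (x (k + 1))
          + G ^ 2 / (2 * (η * α)) := fun k _ => by
      have hlin := lsqLoss_le_add (C k) (y k) (hR k) (ε := η * α) (by positivity) (hG k) (x (k + 1))
      have hprox := mul_le_mul_of_nonneg_left (hPα (x (k + 1) - x k)) (by positivity : 0 ≤ η / 2)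
      nlinarith [hstep k]
    have hsum := sum_range_le_of_le_sub_succ_add hkey hΦN
    have hsplit : ∑ k ∈ range N, (lsqLoss (R k) (C k) (y k) (x k) + g (ν k))
        = ∑ k ∈ range N, (lsqLoss (R k) (C k) (y k) (x k) + g (ν (k + 1)))
          - ∑ k ∈ range N, (g (ν (k + 1)) - g (ν k)) := by
      rw [← sum_sub_distrib]
      exact sum_congr rfl fun k _ => by ring
    rw [sum_sub_distrib] at hsum
    linarith [sum_range_sub (fun k => g (ν k)) N]
  · rw [mul_sum]
    refine sum_range_le_of_le_sub_succ_add
      (Φ := fun k => admmPotential ρ η P xs (w k) (ν k) (x k)) (fun k _ => ?_) hΦN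
    have hprox := mul_nonneg (by positivity : 0 ≤ η / 2) (qnorm_nonneg hP (x (k + 1) - x k))
    linarith [hstep k, hF k]

end OnlineADMM

theorem tuned_step_size_identities {N : ℕ} (hN : 0 < N) {α G D η : ℝ} (hα : 0 < α)
    (hη : η = G * √N / (D * √(2 * α))) :
    η * D ^ 2 = G * √N * D / √(2 * α) ∧
      N * (G ^ 2 / (2 * (η * α))) = G * D * √N / √(2 * α) := by
  have hs : 0 < √(N : ℝ) := Real.sqrt_pos.2 (Nat.cast_pos.2 hN)
  have hb : 0 < √(2 * α) := Real.sqrt_pos.2 (by positivity)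
  have hs2 : √(N : ℝ) ^ 2 = N := Real.sq_sqrt (Nat.cast_nonneg N)
  have hb2 : √(2 * α) ^ 2 = 2 * α := Real.sq_sqrt (by positivity)
  subst hη
  generalize √(N : ℝ) = s at *
  generalize √(2 * α) = b at *
  obtain rfl : α = b ^ 2 / 2 := by linarith
  rw [← hs2]
  constructor <;> field_simp

theorem regret_bounds_constant_P_general {n m : ℕ} (N : ℕ)
    -- data of the losses `f_k(x) = ½‖y_k − C_k x‖²_{R_k⁻¹}`
    (C : ℕ → Matrix (Fin m) (Fin n) ℝ) (Rinv : ℕ → Matrix (Fin m) (Fin m) ℝ)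
    (y : ℕ → EuclideanSpace ℝ (Fin m))
    (hR : ∀ k, (Rinv k).PosDef)
    (f : ℕ → EuclideanSpace ℝ (Fin n) → ℝ)
    (hf : ∀ k x', f k x' = (1 / 2) * qnorm (Rinv k) (y k - act (C k) x'))
    -- proper convex regularizer
    (g : EuclideanSpace ℝ (Fin n) → ℝ) (hg : ConvexOn ℝ Set.univ g)
    -- the (inverses of the) covariance matrices, constant in time
    (Pinv : ℕ → Matrix (Fin n) (Fin n) ℝ) (hP : ∀ k, (Pinv k).PosDef)
    (hPconst : ∀ k, Pinv k = Pinv 0)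
    (ρ η : ℝ)
    -- the online ADMM–EKF iterates
    (x ν w : ℕ → EuclideanSpace ℝ (Fin n))
    (hν0 : ν 0 = x 0) (hw0 : w 0 = 0)
    (hxup : ∀ k, ∀ z : EuclideanSpace ℝ (Fin n),
      f k (x (k + 1)) + ⟪w k, x (k + 1) - ν k⟫ + ρ / 2 * ‖x (k + 1) - ν k‖ ^ 2
          + η / 2 * qnorm (Pinv k) (x (k + 1) - x k)
        ≤ f k z + ⟪w k, z - ν k⟫ + ρ / 2 * ‖z - ν k‖ ^ 2
          + η / 2 * qnorm (Pinv k) (z - x k))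
    (hνup : ∀ k, ∀ z : EuclideanSpace ℝ (Fin n),
      g (ν (k + 1)) + ⟪w k, x (k + 1) - ν (k + 1)⟫ + ρ / 2 * ‖x (k + 1) - ν (k + 1)‖ ^ 2
        ≤ g z + ⟪w k, x (k + 1) - z⟫ + ρ / 2 * ‖x (k + 1) - z‖ ^ 2)
    (hwup : ∀ k, w (k + 1) = w k + ρ • (x (k + 1) - ν (k + 1)))
    -- best solution in hindsight
    (xs νs : EuclideanSpace ℝ (Fin n)) (hfeas : xs = νs)
    -- assumption A1
    (α Gf Dx Dν F : ℝ) (hα : 0 < α) (hGf : 0 < Gf) (hDx : 0 < Dx)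
    (hA1a : ∀ k, ∀ v : EuclideanSpace ℝ (Fin n), α * ‖v‖ ^ 2 ≤ qnorm (Pinv k) v)
    (hA1b : ∀ k, ‖act ((C k)ᵀ * Rinv k) (act (C k) (x k) - y k)‖ ^ 2 ≤ Gf ^ 2)
    (hA1c1 : ∀ k, (1 / 2) * qnorm (Pinv k) xs ≤ Dx ^ 2)
    (hA1c2 : ‖νs‖ ^ 2 ≤ Dν)
    (hA1d : ∀ k, -F ≤ f k (x (k + 1)) + g (ν (k + 1)) - (f k xs + g νs))
    -- assumption A3
    (hx0 : x 0 = 0) (hg0 : g 0 = 0) (hgnn : ∀ z, 0 ≤ g z)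
    -- tuned parameters
    (hη : η = Gf * Real.sqrt N / (Dx * Real.sqrt (2 * α)))
    (hρ : ρ = Real.sqrt N) :
    -- assumption A2 holds with `M = 0` (for every `k_n`), and the regret bounds hold with `M = 0`
    (∀ kn : ℕ,
      (1 / 2) * ∑ k ∈ Icc 1 kn, qnorm (Pinv k - Pinv (k - 1)) (xs - x k) ≤ 0) ∧
    ((∑ k ∈ range N, (f k (x k) + g (ν k))) - (∑ k ∈ range N, (f k xs + g νs))
      ≤ Real.sqrt N * Dν / 2 + Gf * Dx * Real.sqrt N / Real.sqrt (2 * α)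
        + Gf * Real.sqrt N * Dx / Real.sqrt (2 * α)) ∧
    ((∑ k ∈ range N, ‖x (k + 1) - ν k‖ ^ 2)
      ≤ 2 * F * Real.sqrt N + Dν + 2 * Gf * Dx / Real.sqrt (2 * α)) := by
  subst hfeas
  obtain rfl : f = fun k => lsqLoss (Rinv k) (C k) (y k) := funext fun k => funext (hf k)
  refine ⟨fun kn => by simp [hPconst, qnorm_zero], ?_⟩
  have hDν : 0 ≤ Dν := (sq_nonneg _).trans hA1c2
  obtain rfl | hN := N.eq_zero_or_pos
  · simp only [range_zero, sum_empty, sub_zero, CharP.cast_eq_zero, Real.sqrt_zero, mul_zero,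
      zero_mul, zero_div, add_zero, zero_add]
    exact ⟨le_rfl, add_nonneg hDν (by positivity)⟩
  have hs : 0 < √(N : ℝ) := Real.sqrt_pos.2 (Nat.cast_pos.2 hN)
  have hη0 : 0 < η := hη ▸ by positivity
  have hρ0 : 0 < ρ := hρ ▸ hs
  obtain ⟨hregret, hviol⟩ := admm_regret_and_violation_le (N := N)
    (fun k => (hR k).posSemidef) hg (hP 0).posSemidef hρ0 hη0 hα
    (fun k => hPconst k ▸ hxup k) hνup hwup xs (hA1a 0) hA1b hA1d
  have hΦ0 : admmPotential ρ η (Pinv 0) xs (w 0) (ν 0) (x 0) ≤ ρ / 2 * Dν + η * Dx ^ 2 := by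
    have hν := mul_le_mul_of_nonneg_left hA1c2 (by positivity : 0 ≤ ρ / 2)
    have hx := mul_le_mul_of_nonneg_left (hA1c1 0) hη0.le
    simp only [admmPotential, hw0, hν0, hx0, norm_zero, sub_zero, ne_eq, OfNat.ofNat_ne_zero,
      not_false_eq_true, zero_pow, zero_div, zero_add]
    linarith
  obtain ⟨hprox, hlin⟩ := tuned_step_size_identities hN hα hη
  have hgν0 : g (ν 0) = 0 := by rw [hν0, hx0, hg0]
  subst hρ
  refine ⟨by linarith [hgnn (ν N)], ?_⟩
  have hscale : √(N : ℝ) / 2 * (2 * F * √N + Dν + 2 * Gf * Dx / √(2 * α))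
      = √N / 2 * Dν + Gf * √N * Dx / √(2 * α) + N * F := by
    linear_combination F * Real.mul_self_sqrt (Nat.cast_nonneg (α := ℝ) N)
  exact le_of_mul_le_mul_left (by linarith) (half_pos hs)

/-- Corollary: in the time-invariant steady-state case (constant `P_k`), assumption A2 holds
with `M = 0`, and the regret bounds of Theorem 1 hold with `M = 0`. -/
theorem regret_bounds_constant_P {n m : ℕ} (N : ℕ)
    -- data of the losses `f_k(x) = ½‖y_k − C_k x‖²_{R_k⁻¹}`
    (C : ℕ → Matrix (Fin m) (Fin n) ℝ) (Rinv : ℕ → Matrix (Fin m) (Fin m) ℝ)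
    (y : ℕ → EuclideanSpace ℝ (Fin m))
    (hR : ∀ k, (Rinv k).PosDef)
    (f : ℕ → EuclideanSpace ℝ (Fin n) → ℝ)
    (hf : ∀ k x', f k x' = (1 / 2) * qnorm (Rinv k) (y k - act (C k) x'))
    -- proper convex regularizer
    (g : EuclideanSpace ℝ (Fin n) → ℝ) (hg : ConvexOn ℝ Set.univ g)
    -- the (inverses of the) covariance matrices, constant in time
    (Pinv : ℕ → Matrix (Fin n) (Fin n) ℝ) (hP : ∀ k, (Pinv k).PosDef)
    (hPconst : ∀ k, Pinv k = Pinv 0)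
    (ρ η : ℝ)
    -- the online ADMM–EKF iterates
    (x ν w : ℕ → EuclideanSpace ℝ (Fin n))
    (hν0 : ν 0 = x 0) (hw0 : w 0 = 0)
    (hxup : ∀ k, ∀ z : EuclideanSpace ℝ (Fin n),
      f k (x (k + 1)) + ⟪w k, x (k + 1) - ν k⟫ + ρ / 2 * ‖x (k + 1) - ν k‖ ^ 2
          + η / 2 * qnorm (Pinv k) (x (k + 1) - x k)
        ≤ f k z + ⟪w k, z - ν k⟫ + ρ / 2 * ‖z - ν k‖ ^ 2
          + η / 2 * qnorm (Pinv k) (z - x k))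
    (hνup : ∀ k, ∀ z : EuclideanSpace ℝ (Fin n),
      g (ν (k + 1)) + ⟪w k, x (k + 1) - ν (k + 1)⟫ + ρ / 2 * ‖x (k + 1) - ν (k + 1)‖ ^ 2
        ≤ g z + ⟪w k, x (k + 1) - z⟫ + ρ / 2 * ‖x (k + 1) - z‖ ^ 2)
    (hwup : ∀ k, w (k + 1) = w k + ρ • (x (k + 1) - ν (k + 1)))
    -- best solution in hindsight
    (xs νs : EuclideanSpace ℝ (Fin n)) (hfeas : xs = νs)
    (hopt : ∀ z : EuclideanSpace ℝ (Fin n),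
      (∑ k ∈ range N, (f k xs + g νs)) ≤ ∑ k ∈ range N, (f k z + g z))
    -- assumption A1
    (α Gf Dx Dν F : ℝ) (hα : 0 < α) (hGf : 0 < Gf) (hDx : 0 < Dx) (hDν : 0 < Dν)
    (hF : 0 < F)
    (hA1a : ∀ k, ∀ v : EuclideanSpace ℝ (Fin n), α * ‖v‖ ^ 2 ≤ qnorm (Pinv k) v)
    (hA1b : ∀ k, ‖act ((C k)ᵀ * Rinv k) (act (C k) (x k) - y k)‖ ^ 2 ≤ Gf ^ 2)
    (hA1c1 : ∀ k, (1 / 2) * qnorm (Pinv k) xs ≤ Dx ^ 2)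
    (hA1c2 : ‖νs‖ ^ 2 ≤ Dν)
    (hA1d : ∀ k, -F ≤ f k (x (k + 1)) + g (ν (k + 1)) - (f k xs + g νs))
    -- assumption A3
    (hx0 : x 0 = 0) (hg0 : g 0 = 0) (hgnn : ∀ z, 0 ≤ g z)
    -- tuned parameters
    (hη : η = Gf * Real.sqrt N / (Dx * Real.sqrt (2 * α)))
    (hρ : ρ = Real.sqrt N) :
    -- assumption A2 holds with `M = 0` (for every `k_n`), and the regret bounds hold with `M = 0`
    (∀ kn : ℕ,
      (1 / 2) * ∑ k ∈ Icc 1 kn, qnorm (Pinv k - Pinv (k - 1)) (xs - x k) ≤ 0) ∧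
    ((∑ k ∈ range N, (f k (x k) + g (ν k))) - (∑ k ∈ range N, (f k xs + g νs))
      ≤ Real.sqrt N * Dν / 2 + Gf * Dx * Real.sqrt N / Real.sqrt (2 * α)
        + Gf * Real.sqrt N * Dx / Real.sqrt (2 * α)) ∧
    ((∑ k ∈ range N, ‖x (k + 1) - ν k‖ ^ 2)
      ≤ 2 * F * Real.sqrt N + Dν + 2 * Gf * Dx / Real.sqrt (2 * α)) :=
  regret_bounds_constant_P_general N C Rinv y hR f hf g hg Pinv hP hPconst ρ η x ν w hν0 hw0 hxup
    hνup hwup xs νs hfeas α Gf Dx Dν F hα hGf hDx hA1a hA1b hA1c1 hA1c2 hA1d hx0 hg0 hgnn hη hρ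
end

section
/- Combined per-step inequality (inequality (thmeqn)). Under the online ADMM–EKF iterations with convex differentiable f_k and proper convex g, and with x⋆ = ν⋆, for every k: f_k(x_{k+1}) + g(ν_{k+1}) − (f_k(x⋆) + g(ν⋆)) ≤ (1/(2ρ))(‖w_k‖² − ‖w_{k+1}‖²) − (ρ/2)‖x_{k+1} − ν_k‖² + (ρ/2)(‖ν⋆ − ν_k‖² − ‖ν⋆ − ν_{k+1}‖²) + (η/2)(‖x⋆ − x_k‖²_{P_k⁻¹} − ‖x⋆ − x_{k+1}‖²_{P_k⁻¹} − ‖x_{k+1} − x_k‖²_{P_k⁻¹}). -/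
/-!
If `a` minimizes `φ + ψ` with `φ` convex and `ψ` a quadratic with second-order part `Q`,
comparing `a` with the points of the segment towards `b` and letting the step tend to `0` gives
the three-point inequality `φ a + ψ a + Q (b - a) ≤ φ b + ψ b`; no differentiability is needed.
Adding these inequalities for the `x`- and `ν`-updates at `b = x⋆`, the linear terms in `w_k`
telescope, and the dual update turns the remaining term
`⟪w_k, x_{k+1} - ν_{k+1}⟫ + (ρ/2)‖x_{k+1} - ν_{k+1}‖²` into `(‖w_k‖² - ‖w_{k+1}‖²)/(2ρ)`.
-/
open Finset Matrix
open scoped RealInnerProductSpace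

open Filter Set Topology

section Module

variable {E : Type*} [AddCommGroup E] [Module ℝ E]

theorem convex_combo_sub (a b c : E) (t : ℝ) :
    (1 - t) • a + t • b - c = (1 - t) • (a - c) + t • (b - c) := by
  module

theorem sub_convex_combo (a b c : E) (t : ℝ) :
    c - ((1 - t) • a + t • b) = (1 - t) • (c - a) + t • (c - b) := by
  module

theorem IsMinOn.add_le_of_convexOn
    {φ ψ : E → ℝ} {s : Set E} {a b : E} {m : ℝ}
    (hmin : IsMinOn (φ + ψ) s a) (hφ : ConvexOn ℝ s φ) (ha : a ∈ s) (hb : b ∈ s)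
    (hψ : ∀ t ∈ Ioo (0 : ℝ) 1,
      ψ ((1 - t) • a + t • b) ≤ (1 - t) * ψ a + t * ψ b - t * (1 - t) * m) :
    φ a + ψ a + m ≤ φ b + ψ b := by
  have hscaled : ∀ t ∈ Ioo (0 : ℝ) 1, (1 - t) * m ≤ φ b + ψ b - (φ a + ψ a) := by
    rintro t ⟨ht0, ht1⟩
    have hφt := hφ.2 ha hb (sub_nonneg.2 ht1.le) ht0.le (sub_add_cancel 1 t)
    have hmin_t := isMinOn_iff.1 hmin _
      (hφ.1 ha hb (sub_nonneg.2 ht1.le) ht0.le (sub_add_cancel 1 t))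
    simp only [smul_eq_mul, Pi.add_apply] at hφt hmin_t
    refine le_of_mul_le_mul_left ?_ ht0
    linarith [hψ t ⟨ht0, ht1⟩]
  have hlim : Tendsto (fun t : ℝ => (1 - t) * m) (𝓝[>] 0) (𝓝 m) := by
    have h : Tendsto (fun t : ℝ => (1 - t) * m) (𝓝 0) (𝓝 ((1 - 0) * m)) :=
      (Continuous.tendsto (by fun_prop) 0)
    simpa using h.mono_left nhdsWithin_le_nhds
  linarith [le_of_tendsto hlim (eventually_of_mem (Ioo_mem_nhdsGT one_pos) hscaled)]

end Module

section InnerProductSpace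

variable {E : Type*} [NormedAddCommGroup E] [InnerProductSpace ℝ E]

theorem inner_map_self_convex_combo (A : E →ₗ[ℝ] E) (a b : E) (t : ℝ) :
    ⟪(1 - t) • a + t • b, A ((1 - t) • a + t • b)⟫
      = (1 - t) * ⟪a, A a⟫ + t * ⟪b, A b⟫ - t * (1 - t) * ⟪b - a, A (b - a)⟫ := by
  simp only [map_add, map_sub, map_smul, inner_add_left, inner_add_right, inner_sub_left,
    inner_sub_right, real_inner_smul_left, real_inner_smul_right]
  ring

theorem norm_sq_convex_combo (a b : E) (t : ℝ) :
    ‖(1 - t) • a + t • b‖ ^ 2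
      = (1 - t) * ‖a‖ ^ 2 + t * ‖b‖ ^ 2 - t * (1 - t) * ‖b - a‖ ^ 2 := by
  simpa only [LinearMap.id_apply, real_inner_self_eq_norm_sq]
    using inner_map_self_convex_combo LinearMap.id a b t

theorem inv_two_mul_norm_sq_sub_norm_add_smul_sq {ρ : ℝ} (hρ : ρ ≠ 0) (w r : E) :
    1 / (2 * ρ) * (‖w‖ ^ 2 - ‖w + ρ • r‖ ^ 2) = -⟪w, r⟫ - ρ / 2 * ‖r‖ ^ 2 := by
  rw [norm_add_sq_real, real_inner_smul_right, norm_smul, Real.norm_eq_abs, mul_pow, sq_abs]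
  field_simp
  ring

end InnerProductSpace

theorem qnorm_convex_combo {ι : Type*} [Fintype ι] (M : Matrix ι ι ℝ)
    (a b : EuclideanSpace ℝ ι) (t : ℝ) :
    qnorm M ((1 - t) • a + t • b)
      = (1 - t) * qnorm M a + t * qnorm M b - t * (1 - t) * qnorm M (b - a) := by
  classical
  exact inner_map_self_convex_combo (Matrix.toLpLin 2 2 M) a b t

theorem combined_per_step_inequality_general {n : ℕ}
    -- convex differentiable losses with gradient `f'`
    (f : ℕ → EuclideanSpace ℝ (Fin n) → ℝ)
    (hconv : ∀ k, ConvexOn ℝ Set.univ (f k))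
    -- proper convex regularizer
    (g : EuclideanSpace ℝ (Fin n) → ℝ) (hg : ConvexOn ℝ Set.univ g)
    -- the (inverses of the) covariance matrices
    (Pinv : ℕ → Matrix (Fin n) (Fin n) ℝ)
    (ρ η : ℝ) (hρ : 0 < ρ)
    -- the online ADMM–EKF iterates
    (x ν w : ℕ → EuclideanSpace ℝ (Fin n))
    (hxup : ∀ k, ∀ z : EuclideanSpace ℝ (Fin n),
      f k (x (k + 1)) + ⟪w k, x (k + 1) - ν k⟫ + ρ / 2 * ‖x (k + 1) - ν k‖ ^ 2
          + η / 2 * qnorm (Pinv k) (x (k + 1) - x k)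
        ≤ f k z + ⟪w k, z - ν k⟫ + ρ / 2 * ‖z - ν k‖ ^ 2
          + η / 2 * qnorm (Pinv k) (z - x k))
    (hνup : ∀ k, ∀ z : EuclideanSpace ℝ (Fin n),
      g (ν (k + 1)) + ⟪w k, x (k + 1) - ν (k + 1)⟫ + ρ / 2 * ‖x (k + 1) - ν (k + 1)‖ ^ 2
        ≤ g z + ⟪w k, x (k + 1) - z⟫ + ρ / 2 * ‖x (k + 1) - z‖ ^ 2)
    (hwup : ∀ k, w (k + 1) = w k + ρ • (x (k + 1) - ν (k + 1)))
    -- any feasible point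
    (xs νs : EuclideanSpace ℝ (Fin n)) (hfeas : xs = νs) :
    ∀ k : ℕ,
      f k (x (k + 1)) + g (ν (k + 1)) - (f k xs + g νs)
        ≤ 1 / (2 * ρ) * (‖w k‖ ^ 2 - ‖w (k + 1)‖ ^ 2)
          - ρ / 2 * ‖x (k + 1) - ν k‖ ^ 2
          + ρ / 2 * (‖νs - ν k‖ ^ 2 - ‖νs - ν (k + 1)‖ ^ 2)
          + η / 2 * (qnorm (Pinv k) (xs - x k) - qnorm (Pinv k) (xs - x (k + 1))
              - qnorm (Pinv k) (x (k + 1) - x k)) := by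
  subst hfeas
  intro k
  have hx_step := IsMinOn.add_le_of_convexOn (φ := f k) (a := x (k + 1)) (b := xs)
    (ψ := fun z => ⟪w k, z - ν k⟫ + ρ / 2 * ‖z - ν k‖ ^ 2 + η / 2 * qnorm (Pinv k) (z - x k))
    (m := ρ / 2 * ‖x (k + 1) - xs‖ ^ 2 + η / 2 * qnorm (Pinv k) (xs - x (k + 1)))
    (isMinOn_univ_iff.2 fun z => by simpa only [Pi.add_apply, add_assoc] using hxup k z)
    (hconv k) trivial trivial fun t _ => le_of_eq (by
      simp only [convex_combo_sub, inner_add_right, real_inner_smul_right, norm_sq_convex_combo,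
        qnorm_convex_combo, sub_sub_sub_cancel_right, norm_sub_rev xs (x (k + 1))]
      ring)
  have hν_step := IsMinOn.add_le_of_convexOn (φ := g) (a := ν (k + 1)) (b := xs)
    (ψ := fun z => ⟪w k, x (k + 1) - z⟫ + ρ / 2 * ‖x (k + 1) - z‖ ^ 2)
    (m := ρ / 2 * ‖xs - ν (k + 1)‖ ^ 2)
    (isMinOn_univ_iff.2 fun z => by simpa only [Pi.add_apply, add_assoc] using hνup k z)
    hg trivial trivial fun t _ => le_of_eq (by
      simp only [sub_convex_combo, inner_add_right, real_inner_smul_right, norm_sq_convex_combo,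
        sub_sub_sub_cancel_left, norm_sub_rev (ν (k + 1)) xs]
      ring)
  have hdual := inv_two_mul_norm_sq_sub_norm_add_smul_sq hρ.ne' (w k) (x (k + 1) - ν (k + 1))
  rw [← hwup k] at hdual
  have hinner : ⟪w k, xs - ν k⟫ + ⟪w k, x (k + 1) - xs⟫ = ⟪w k, x (k + 1) - ν k⟫ := by
    rw [← inner_add_right, add_comm, sub_add_sub_cancel]
  beta_reduce at hx_step hν_step
  linarith

/-- Combined per-step inequality (thmeqn) for the online ADMM–EKF iterations. -/
theorem combined_per_step_inequality {n : ℕ}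
    -- convex differentiable losses with gradient `f'`
    (f : ℕ → EuclideanSpace ℝ (Fin n) → ℝ)
    (f' : ℕ → EuclideanSpace ℝ (Fin n) → EuclideanSpace ℝ (Fin n))
    (hconv : ∀ k, ConvexOn ℝ Set.univ (f k))
    (hgrad : ∀ k z, HasGradientAt (f k) (f' k z) z)
    -- proper convex regularizer
    (g : EuclideanSpace ℝ (Fin n) → ℝ) (hg : ConvexOn ℝ Set.univ g)
    -- the (inverses of the) covariance matrices
    (Pinv : ℕ → Matrix (Fin n) (Fin n) ℝ) (hP : ∀ k, (Pinv k).PosDef)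
    (ρ η : ℝ) (hρ : 0 < ρ) (hη : 0 < η)
    -- the online ADMM–EKF iterates
    (x ν w : ℕ → EuclideanSpace ℝ (Fin n))
    (hν0 : ν 0 = x 0) (hw0 : w 0 = 0)
    (hxup : ∀ k, ∀ z : EuclideanSpace ℝ (Fin n),
      f k (x (k + 1)) + ⟪w k, x (k + 1) - ν k⟫ + ρ / 2 * ‖x (k + 1) - ν k‖ ^ 2
          + η / 2 * qnorm (Pinv k) (x (k + 1) - x k)
        ≤ f k z + ⟪w k, z - ν k⟫ + ρ / 2 * ‖z - ν k‖ ^ 2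
          + η / 2 * qnorm (Pinv k) (z - x k))
    (hνup : ∀ k, ∀ z : EuclideanSpace ℝ (Fin n),
      g (ν (k + 1)) + ⟪w k, x (k + 1) - ν (k + 1)⟫ + ρ / 2 * ‖x (k + 1) - ν (k + 1)‖ ^ 2
        ≤ g z + ⟪w k, x (k + 1) - z⟫ + ρ / 2 * ‖x (k + 1) - z‖ ^ 2)
    (hwup : ∀ k, w (k + 1) = w k + ρ • (x (k + 1) - ν (k + 1)))
    -- any feasible point
    (xs νs : EuclideanSpace ℝ (Fin n)) (hfeas : xs = νs) :
    ∀ k : ℕ,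
      f k (x (k + 1)) + g (ν (k + 1)) - (f k xs + g νs)
        ≤ 1 / (2 * ρ) * (‖w k‖ ^ 2 - ‖w (k + 1)‖ ^ 2)
          - ρ / 2 * ‖x (k + 1) - ν k‖ ^ 2
          + ρ / 2 * (‖νs - ν k‖ ^ 2 - ‖νs - ν (k + 1)‖ ^ 2)
          + η / 2 * (qnorm (Pinv k) (xs - x k) - qnorm (Pinv k) (xs - x (k + 1))
              - qnorm (Pinv k) (x (k + 1) - x k)) :=
  combined_per_step_inequality_general f hconv g hg Pinv ρ η hρ x ν w hxup hνup hwup xs νs hfeas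
end

section
/- Per-step regret inequality at the current iterate. Under the online ADMM–EKF iterations with convex differentiable f_k and proper convex g, with x⋆ = ν⋆, and assuming ‖v‖²_{P_k⁻¹} ≥ α‖v‖² for all v (with α > 0), for every k: f_k(x_k) + g(ν_{k+1}) − (f_k(x⋆) + g(ν⋆)) ≤ (1/(2ρ))(‖w_k‖² − ‖w_{k+1}‖²) − (ρ/2)‖x_{k+1} − ν_k‖² + (ρ/2)(‖ν⋆ − ν_k‖² − ‖ν⋆ − ν_{k+1}‖²) + (1/(2αη))‖∇f_k(x_k)‖² + (η/2)(‖x⋆ − x_k‖²_{P_k⁻¹} − ‖x⋆ − x_{k+1}‖²_{P_k⁻¹}). -/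
open Finset Matrix
open scoped RealInnerProductSpace

/-! Both ADMM updates minimize a convex function plus a quadratic, so the three-point
inequality compares the value at the minimizer with the value at the feasible point, with the
curvature of the quadratic as a bonus term. Adding the two inequalities, the multiplier terms
combine through the dual update into `(‖w_k‖² - ‖w_{k+1}‖²) / (2ρ)`. The loss is evaluated at
`x_k` rather than `x_{k+1}`: the gap `f_k(x_k) - f_k(x_{k+1})` is bounded by the gradient
inequality and Young's inequality, and the resulting `‖x_{k+1} - x_k‖²` is absorbed by the
proximal term through `α ‖v‖² ≤ ‖v‖²_{P_k⁻¹}`. -/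

open Filter Set Topology

section InnerProductSpace

variable {E : Type*} [NormedAddCommGroup E] [InnerProductSpace ℝ E]

lemma norm_add_smul_sq (u d : E) (t : ℝ) :
    ‖u + t • d‖ ^ 2 = ‖u‖ ^ 2 + t * (2 * ⟪u, d⟫) + t ^ 2 * ‖d‖ ^ 2 := by
  rw [norm_add_sq_real, real_inner_smul_right, norm_smul, mul_pow, Real.norm_eq_abs, sq_abs]
  ring

theorem ConvexOn.three_point {h Q L K : E → ℝ} {p : E} (hh : ConvexOn ℝ univ h)
    (hQ : ∀ d (t : ℝ), Q (p + t • d) = Q p + t * L d + t ^ 2 * K d)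
    (hp : ∀ z, h p + Q p ≤ h z + Q z) (z : E) :
    h p + Q p + K (z - p) ≤ h z + Q z := by
  set d := z - p
  have hQz : Q z = Q p + L d + K d := by simpa [d] using hQ d 1
  -- minimality against `p + t • d` and convexity along the segment, then `t → 0⁺`
  have hsmall : ∀ t ∈ Ioc (0 : ℝ) 1, h p - h z - L d ≤ t * K d := by
    rintro t ⟨ht0, ht1⟩
    have hseg : h (p + t • d) ≤ (1 - t) * h p + t * h z := by
      have := hh.2 (mem_univ p) (mem_univ z) (by linarith : 0 ≤ 1 - t) ht0.le (by ring)
      rwa [show (1 - t) • p + t • z = p + t • d by module] at this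
    have hmin := hp (p + t • d)
    rw [hQ] at hmin
    have : t * (h p - h z - L d) ≤ t * (t * K d) := by linarith
    exact le_of_mul_le_mul_left this ht0
  have hlim : Tendsto (fun t : ℝ => t * K d) (𝓝[>] 0) (𝓝 0) := by
    simpa using ((tendsto_id (x := 𝓝 (0 : ℝ))).mul_const (K d)).mono_left nhdsWithin_le_nhds
  have := ge_of_tendsto hlim (eventually_of_mem (Ioc_mem_nhdsGT one_pos) hsmall)
  linarith

theorem ConvexOn.three_point_augLagrangian {h : E → ℝ} (hh : ConvexOn ℝ univ h) {w x p : E}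
    {ρ : ℝ}
    (hp : ∀ z, h p + ⟪w, x - p⟫ + ρ / 2 * ‖x - p‖ ^ 2 ≤ h z + ⟪w, x - z⟫ + ρ / 2 * ‖x - z‖ ^ 2)
    (z : E) :
    h p + ⟪w, x - p⟫ + ρ / 2 * ‖x - p‖ ^ 2 + ρ / 2 * ‖z - p‖ ^ 2
      ≤ h z + ⟪w, x - z⟫ + ρ / 2 * ‖x - z‖ ^ 2 := by
  have hQ (d : E) (t : ℝ) :
      ⟪w, x - (p + t • d)⟫ + ρ / 2 * ‖x - (p + t • d)‖ ^ 2
        = ⟪w, x - p⟫ + ρ / 2 * ‖x - p‖ ^ 2 + t * (-⟪w, d⟫ - ρ * ⟪x - p, d⟫)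
          + t ^ 2 * (ρ / 2 * ‖d‖ ^ 2) := by
    rw [show x - (p + t • d) = (x - p) + t • (-d) by module, norm_add_smul_sq, inner_add_right,
      real_inner_smul_right, inner_neg_right, inner_neg_right, norm_neg]
    ring
  have := hh.three_point (Q := fun z => ⟪w, x - z⟫ + ρ / 2 * ‖x - z‖ ^ 2) hQ
    (fun z => by linarith [hp z]) z
  linarith

theorem ConvexOn.inner_gradient_le_sub [CompleteSpace E] {f : E → ℝ} (hf : ConvexOn ℝ univ f)
    {a g : E} (hg : HasGradientAt f g a) (b : E) : ⟪g, b - a⟫ ≤ f b - f a := by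
  let ℓ : ℝ →ᵃ[ℝ] E := AffineMap.lineMap a b
  have hφ : ConvexOn ℝ univ (f ∘ ℓ) := hf.comp_affineMap ℓ
  have hderiv : HasDerivAt (f ∘ ℓ) ⟪g, b - a⟫ 0 := by
    simpa using hg.hasFDerivAt.comp_hasDerivAt_of_eq 0 AffineMap.hasDerivAt_lineMap (by simp)
  simpa [slope, ℓ] using hφ.le_slope_of_hasDerivAt (mem_univ 0) (mem_univ 1) one_pos hderiv

theorem ConvexOn.le_add_of_hasGradientAt [CompleteSpace E] {f : E → ℝ}
    (hf : ConvexOn ℝ univ f) {a g : E} (hg : HasGradientAt f g a) (b : E) {c : ℝ} (hc : 0 < c) :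
    f a ≤ f b + 1 / (2 * c) * ‖g‖ ^ 2 + c / 2 * ‖b - a‖ ^ 2 := by
  have hlin := hf.inner_gradient_le_sub hg b
  have hyoung : 0 ≤ 1 / (2 * c) * ‖g‖ ^ 2 + c / 2 * ‖b - a‖ ^ 2 + ⟪g, b - a⟫ := by
    have hsq : 1 / (2 * c) * ‖g‖ ^ 2 + c / 2 * ‖b - a‖ ^ 2 + ⟪g, b - a⟫
        = ‖g + c • (b - a)‖ ^ 2 / (2 * c) := by
      rw [norm_add_smul_sq]
      field_simp
      ring
    rw [hsq]
    positivity
  linarith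

end InnerProductSpace

section Matrix

variable {ι κ : Type*} [Fintype ι] [Fintype κ]

lemma act_add (M : Matrix ι κ ℝ) (u v : EuclideanSpace ℝ κ) :
    act M (u + v) = act M u + act M v := by
  simp [act, mulVec_add]

lemma act_smul (M : Matrix ι κ ℝ) (t : ℝ) (v : EuclideanSpace ℝ κ) :
    act M (t • v) = t • act M v := by
  simp [act, mulVec_smul]

lemma qnorm_add_smul (M : Matrix ι ι ℝ) (u d : EuclideanSpace ℝ ι) (t : ℝ) :
    qnorm M (u + t • d) = qnorm M u + t * (⟪d, act M u⟫ + ⟪u, act M d⟫) + t ^ 2 * qnorm M d := by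
  simp only [qnorm, act_add, act_smul, inner_add_left, inner_add_right, real_inner_smul_left,
    real_inner_smul_right]
  ring

theorem ConvexOn.three_point_augLagrangian_prox {h : EuclideanSpace ℝ ι → ℝ}
    (hh : ConvexOn ℝ univ h) (M : Matrix ι ι ℝ) {w c a p : EuclideanSpace ℝ ι} {ρ η : ℝ}
    (hp : ∀ z, h p + ⟪w, p - c⟫ + ρ / 2 * ‖p - c‖ ^ 2 + η / 2 * qnorm M (p - a)
      ≤ h z + ⟪w, z - c⟫ + ρ / 2 * ‖z - c‖ ^ 2 + η / 2 * qnorm M (z - a))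
    (z : EuclideanSpace ℝ ι) :
    h p + ⟪w, p - c⟫ + ρ / 2 * ‖p - c‖ ^ 2 + η / 2 * qnorm M (p - a)
        + (ρ / 2 * ‖z - p‖ ^ 2 + η / 2 * qnorm M (z - p))
      ≤ h z + ⟪w, z - c⟫ + ρ / 2 * ‖z - c‖ ^ 2 + η / 2 * qnorm M (z - a) := by
  have hQ (d : EuclideanSpace ℝ ι) (t : ℝ) :
      ⟪w, p + t • d - c⟫ + ρ / 2 * ‖p + t • d - c‖ ^ 2 + η / 2 * qnorm M (p + t • d - a)
        = ⟪w, p - c⟫ + ρ / 2 * ‖p - c‖ ^ 2 + η / 2 * qnorm M (p - a)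
          + t * (⟪w, d⟫ + ρ * ⟪p - c, d⟫ + η / 2 * (⟪d, act M (p - a)⟫ + ⟪p - a, act M d⟫))
          + t ^ 2 * (ρ / 2 * ‖d‖ ^ 2 + η / 2 * qnorm M d) := by
    rw [show p + t • d - c = (p - c) + t • d by module,
      show p + t • d - a = (p - a) + t • d by module, norm_add_smul_sq, qnorm_add_smul,
      inner_add_right, real_inner_smul_right]
    ring
  have := hh.three_point
    (Q := fun z => ⟪w, z - c⟫ + ρ / 2 * ‖z - c‖ ^ 2 + η / 2 * qnorm M (z - a)) hQ
    (fun z => by linarith [hp z]) z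
  linarith

end Matrix

theorem per_step_regret_current_iterate_general {n : ℕ}
    -- convex differentiable losses with gradient `f'`
    (f : ℕ → EuclideanSpace ℝ (Fin n) → ℝ)
    (f' : ℕ → EuclideanSpace ℝ (Fin n) → EuclideanSpace ℝ (Fin n))
    (hconv : ∀ k, ConvexOn ℝ Set.univ (f k))
    (hgrad : ∀ k z, HasGradientAt (f k) (f' k z) z)
    -- proper convex regularizer
    (g : EuclideanSpace ℝ (Fin n) → ℝ) (hg : ConvexOn ℝ Set.univ g)
    -- the (inverses of the) covariance matrices
    (Pinv : ℕ → Matrix (Fin n) (Fin n) ℝ)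
    (ρ η : ℝ) (hρ : 0 < ρ) (hη : 0 < η)
    -- strong-convexity lower bound on the weighted norms
    (α : ℝ) (hα : 0 < α)
    (hA1a : ∀ k, ∀ v : EuclideanSpace ℝ (Fin n), α * ‖v‖ ^ 2 ≤ qnorm (Pinv k) v)
    -- the online ADMM–EKF iterates
    (x ν w : ℕ → EuclideanSpace ℝ (Fin n))
    (hxup : ∀ k, ∀ z : EuclideanSpace ℝ (Fin n),
      f k (x (k + 1)) + ⟪w k, x (k + 1) - ν k⟫ + ρ / 2 * ‖x (k + 1) - ν k‖ ^ 2
          + η / 2 * qnorm (Pinv k) (x (k + 1) - x k)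
        ≤ f k z + ⟪w k, z - ν k⟫ + ρ / 2 * ‖z - ν k‖ ^ 2
          + η / 2 * qnorm (Pinv k) (z - x k))
    (hνup : ∀ k, ∀ z : EuclideanSpace ℝ (Fin n),
      g (ν (k + 1)) + ⟪w k, x (k + 1) - ν (k + 1)⟫ + ρ / 2 * ‖x (k + 1) - ν (k + 1)‖ ^ 2
        ≤ g z + ⟪w k, x (k + 1) - z⟫ + ρ / 2 * ‖x (k + 1) - z‖ ^ 2)
    (hwup : ∀ k, w (k + 1) = w k + ρ • (x (k + 1) - ν (k + 1)))
    -- any feasible point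
    (xs νs : EuclideanSpace ℝ (Fin n)) (hfeas : xs = νs) :
    ∀ k : ℕ,
      f k (x k) + g (ν (k + 1)) - (f k xs + g νs)
        ≤ 1 / (2 * ρ) * (‖w k‖ ^ 2 - ‖w (k + 1)‖ ^ 2)
          - ρ / 2 * ‖x (k + 1) - ν k‖ ^ 2
          + ρ / 2 * (‖νs - ν k‖ ^ 2 - ‖νs - ν (k + 1)‖ ^ 2)
          + 1 / (2 * α * η) * ‖f' k (x k)‖ ^ 2
          + η / 2 * (qnorm (Pinv k) (xs - x k) - qnorm (Pinv k) (xs - x (k + 1))) := by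
  subst hfeas
  intro k
  have hx := (hconv k).three_point_augLagrangian_prox (Pinv k) (hxup k) xs
  have hν := hg.three_point_augLagrangian (hνup k) xs
  rw [norm_sub_rev (x (k + 1)) xs] at hν
  have hf := (hconv k).le_add_of_hasGradientAt (hgrad k (x k)) (x (k + 1)) (mul_pos hα hη)
  have hqnorm : α * η / 2 * ‖x (k + 1) - x k‖ ^ 2 ≤ η / 2 * qnorm (Pinv k) (x (k + 1) - x k) := by
    nlinarith [hA1a k (x (k + 1) - x k)]
  have hw : 1 / (2 * ρ) * (‖w k‖ ^ 2 - ‖w (k + 1)‖ ^ 2)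
      = -⟪w k, x (k + 1) - ν (k + 1)⟫ - ρ / 2 * ‖x (k + 1) - ν (k + 1)‖ ^ 2 := by
    rw [hwup k, norm_add_smul_sq]
    field_simp
    ring
  have hinner : ⟪w k, xs - ν k⟫ + ⟪w k, x (k + 1) - xs⟫ = ⟪w k, x (k + 1) - ν k⟫ := by
    rw [← inner_add_right, sub_add_sub_cancel']
  rw [mul_assoc 2 α η]
  linarith

/-- Per-step regret inequality at the current iterate for the online ADMM–EKF iterations. -/
theorem per_step_regret_current_iterate {n : ℕ}
    -- convex differentiable losses with gradient `f'`
    (f : ℕ → EuclideanSpace ℝ (Fin n) → ℝ)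
    (f' : ℕ → EuclideanSpace ℝ (Fin n) → EuclideanSpace ℝ (Fin n))
    (hconv : ∀ k, ConvexOn ℝ Set.univ (f k))
    (hgrad : ∀ k z, HasGradientAt (f k) (f' k z) z)
    -- proper convex regularizer
    (g : EuclideanSpace ℝ (Fin n) → ℝ) (hg : ConvexOn ℝ Set.univ g)
    -- the (inverses of the) covariance matrices
    (Pinv : ℕ → Matrix (Fin n) (Fin n) ℝ) (hP : ∀ k, (Pinv k).PosDef)
    (ρ η : ℝ) (hρ : 0 < ρ) (hη : 0 < η)
    -- strong-convexity lower bound on the weighted norms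
    (α : ℝ) (hα : 0 < α)
    (hA1a : ∀ k, ∀ v : EuclideanSpace ℝ (Fin n), α * ‖v‖ ^ 2 ≤ qnorm (Pinv k) v)
    -- the online ADMM–EKF iterates
    (x ν w : ℕ → EuclideanSpace ℝ (Fin n))
    (hν0 : ν 0 = x 0) (hw0 : w 0 = 0)
    (hxup : ∀ k, ∀ z : EuclideanSpace ℝ (Fin n),
      f k (x (k + 1)) + ⟪w k, x (k + 1) - ν k⟫ + ρ / 2 * ‖x (k + 1) - ν k‖ ^ 2
          + η / 2 * qnorm (Pinv k) (x (k + 1) - x k)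
        ≤ f k z + ⟪w k, z - ν k⟫ + ρ / 2 * ‖z - ν k‖ ^ 2
          + η / 2 * qnorm (Pinv k) (z - x k))
    (hνup : ∀ k, ∀ z : EuclideanSpace ℝ (Fin n),
      g (ν (k + 1)) + ⟪w k, x (k + 1) - ν (k + 1)⟫ + ρ / 2 * ‖x (k + 1) - ν (k + 1)‖ ^ 2
        ≤ g z + ⟪w k, x (k + 1) - z⟫ + ρ / 2 * ‖x (k + 1) - z‖ ^ 2)
    (hwup : ∀ k, w (k + 1) = w k + ρ • (x (k + 1) - ν (k + 1)))
    -- any feasible point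
    (xs νs : EuclideanSpace ℝ (Fin n)) (hfeas : xs = νs) :
    ∀ k : ℕ,
      f k (x k) + g (ν (k + 1)) - (f k xs + g νs)
        ≤ 1 / (2 * ρ) * (‖w k‖ ^ 2 - ‖w (k + 1)‖ ^ 2)
          - ρ / 2 * ‖x (k + 1) - ν k‖ ^ 2
          + ρ / 2 * (‖νs - ν k‖ ^ 2 - ‖νs - ν (k + 1)‖ ^ 2)
          + 1 / (2 * α * η) * ‖f' k (x k)‖ ^ 2
          + η / 2 * (qnorm (Pinv k) (xs - x k) - qnorm (Pinv k) (xs - x (k + 1))) :=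
  per_step_regret_current_iterate_general f f' hconv hgrad g hg Pinv ρ η hρ hη α hα hA1a x ν w hxup
    hνup hwup xs νs hfeas
end

section
/- Per-step constraint-violation inequality. Under the online ADMM–EKF iterations with convex differentiable f_k and proper convex g, with x⋆ = ν⋆, and assuming f_k(x_{k+1}) + g(ν_{k+1}) − (f_k(x⋆) + g(ν⋆)) ≥ −F for some F > 0, for every k: ‖x_{k+1} − ν_k‖² ≤ 2F/ρ + (1/ρ²)(‖w_k‖² − ‖w_{k+1}‖²) + (‖ν⋆ − ν_k‖² − ‖ν⋆ − ν_{k+1}‖²) + (η/ρ)(‖x⋆ − x_k‖²_{P_k⁻¹} − ‖x⋆ − x_{k+1}‖²_{P_k⁻¹} − ‖x_{k+1} − x_k‖²_{P_k⁻¹}). -/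
/-!
Both primal updates are proximal steps: the objective is a convex function plus a quadratic `Q`
whose second-order part `B` is exact along segments. Comparing the minimizer `u` with the points
`(1 - t) • u + t • z` and letting `t → 0` gives the three-point inequality
`φ u + Q u + B (z - u) ≤ φ z + Q z`. Adding the two instances at `z = x⋆ = ν⋆`, bounding the loss
gap by A1.d and expanding `‖w_{k+1}‖²` through the dual update leaves the claim times `ρ / 2`.
-/

open Finset Matrix
open scoped RealInnerProductSpace

open Filter Topology

section ThreePoint

variable {E : Type*} [AddCommGroup E] [Module ℝ E]

theorem ConvexOn.add_le_of_isMinOn_add {s : Set E} {φ Q B : E → ℝ} {u z : E}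
    (hφ : ConvexOn ℝ s φ)
    (hQ : ∀ a b : E, ∀ t : ℝ,
      Q ((1 - t) • a + t • b) = (1 - t) * Q a + t * Q b - t * (1 - t) * B (b - a))
    (hu : u ∈ s) (hmin : IsMinOn (φ + Q) s u) (hz : z ∈ s) :
    φ u + Q u + B (z - u) ≤ φ z + Q z := by
  have hseg : ∀ t ∈ Set.Ioc (0 : ℝ) 1, φ u + Q u + (1 - t) * B (z - u) ≤ φ z + Q z := by
    rintro t ⟨ht0, ht1⟩
    have hmem : (1 - t) • u + t • z ∈ s :=
      hφ.1 hu hz (sub_nonneg.2 ht1) ht0.le (sub_add_cancel 1 t)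
    have hle := isMinOn_iff.mp hmin _ hmem
    have hφt := hφ.2 hu hz (sub_nonneg.2 ht1) ht0.le (sub_add_cancel 1 t)
    simp only [Pi.add_apply, hQ, smul_eq_mul] at hle hφt
    have : t * (φ u + Q u + (1 - t) * B (z - u)) ≤ t * (φ z + Q z) := by linarith
    exact le_of_mul_le_mul_left this ht0
  have hlim : Tendsto (fun t : ℝ => φ u + Q u + (1 - t) * B (z - u)) (𝓝[>] 0)
      (𝓝 (φ u + Q u + B (z - u))) := by
    have : Continuous (fun t : ℝ => φ u + Q u + (1 - t) * B (z - u)) := by fun_prop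
    simpa using this.continuousWithinAt.tendsto (x := (0 : ℝ)) (s := Set.Ioi 0)
  exact le_of_tendsto hlim (eventually_of_mem (Ioc_mem_nhdsGT one_pos) hseg)

end ThreePoint

section Quadratic

variable {E : Type*} [NormedAddCommGroup E] [InnerProductSpace ℝ E]

theorem inner_map_self_sub_convexCombination (T : E →ₗ[ℝ] E) (u v c : E) (t : ℝ) :
    ⟪(1 - t) • u + t • v - c, T ((1 - t) • u + t • v - c)⟫
      = (1 - t) * ⟪u - c, T (u - c)⟫ + t * ⟪v - c, T (v - c)⟫
        - t * (1 - t) * ⟪v - u, T (v - u)⟫ := by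
  rw [show (1 - t) • u + t • v - c = (1 - t) • (u - c) + t • (v - c) by module,
    show v - u = (v - c) - (u - c) by abel]
  simp only [map_add, map_sub, map_smul, inner_add_left, inner_add_right, inner_sub_left,
    inner_sub_right, real_inner_smul_left, real_inner_smul_right]
  ring

theorem norm_sub_convexCombination_sq (u v c : E) (t : ℝ) :
    ‖(1 - t) • u + t • v - c‖ ^ 2
      = (1 - t) * ‖u - c‖ ^ 2 + t * ‖v - c‖ ^ 2 - t * (1 - t) * ‖v - u‖ ^ 2 := by
  simpa only [LinearMap.id_apply, real_inner_self_eq_norm_sq]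
    using inner_map_self_sub_convexCombination LinearMap.id u v c t

theorem qnorm_sub_convexCombination {n : ℕ} (M : Matrix (Fin n) (Fin n) ℝ)
    (u v c : EuclideanSpace ℝ (Fin n)) (t : ℝ) :
    qnorm M ((1 - t) • u + t • v - c)
      = (1 - t) * qnorm M (u - c) + t * qnorm M (v - c) - t * (1 - t) * qnorm M (v - u) :=
  inner_map_self_sub_convexCombination (Matrix.toEuclideanLin M) u v c t

end Quadratic

theorem per_step_constraint_violation_general {n : ℕ}
    -- convex differentiable losses with gradient `f'`
    (f : ℕ → EuclideanSpace ℝ (Fin n) → ℝ)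
    (hconv : ∀ k, ConvexOn ℝ Set.univ (f k))
    -- proper convex regularizer
    (g : EuclideanSpace ℝ (Fin n) → ℝ) (hg : ConvexOn ℝ Set.univ g)
    -- the (inverses of the) covariance matrices
    (Pinv : ℕ → Matrix (Fin n) (Fin n) ℝ)
    (ρ η : ℝ) (hρ : 0 < ρ)
    -- the online ADMM–EKF iterates
    (x ν w : ℕ → EuclideanSpace ℝ (Fin n))
    (hxup : ∀ k, ∀ z : EuclideanSpace ℝ (Fin n),
      f k (x (k + 1)) + ⟪w k, x (k + 1) - ν k⟫ + ρ / 2 * ‖x (k + 1) - ν k‖ ^ 2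
          + η / 2 * qnorm (Pinv k) (x (k + 1) - x k)
        ≤ f k z + ⟪w k, z - ν k⟫ + ρ / 2 * ‖z - ν k‖ ^ 2
          + η / 2 * qnorm (Pinv k) (z - x k))
    (hνup : ∀ k, ∀ z : EuclideanSpace ℝ (Fin n),
      g (ν (k + 1)) + ⟪w k, x (k + 1) - ν (k + 1)⟫ + ρ / 2 * ‖x (k + 1) - ν (k + 1)‖ ^ 2
        ≤ g z + ⟪w k, x (k + 1) - z⟫ + ρ / 2 * ‖x (k + 1) - z‖ ^ 2)
    (hwup : ∀ k, w (k + 1) = w k + ρ • (x (k + 1) - ν (k + 1)))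
    -- best solution in hindsight
    (xs νs : EuclideanSpace ℝ (Fin n)) (hfeas : xs = νs)
    -- assumption A1.d
    (F : ℝ)
    (hA1d : ∀ k, -F ≤ f k (x (k + 1)) + g (ν (k + 1)) - (f k xs + g νs)) :
    ∀ k : ℕ,
      ‖x (k + 1) - ν k‖ ^ 2
        ≤ 2 * F / ρ + 1 / ρ ^ 2 * (‖w k‖ ^ 2 - ‖w (k + 1)‖ ^ 2)
          + (‖νs - ν k‖ ^ 2 - ‖νs - ν (k + 1)‖ ^ 2)
          + η / ρ * (qnorm (Pinv k) (xs - x k) - qnorm (Pinv k) (xs - x (k + 1))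
              - qnorm (Pinv k) (x (k + 1) - x k)) := by
  subst hfeas
  intro k
  have hx := (hconv k).add_le_of_isMinOn_add
    (Q := fun z => ⟪w k, z - ν k⟫ + ρ / 2 * ‖z - ν k‖ ^ 2 + η / 2 * qnorm (Pinv k) (z - x k))
    (B := fun v => ρ / 2 * ‖v‖ ^ 2 + η / 2 * qnorm (Pinv k) v)
    (fun a b t => by
      simp only [inner_sub_right, inner_add_right, real_inner_smul_right,
        norm_sub_convexCombination_sq, qnorm_sub_convexCombination]
      ring)
    (Set.mem_univ _)
    (isMinOn_univ_iff.2 fun z => by simpa only [Pi.add_apply, add_assoc] using hxup k z)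
    (Set.mem_univ xs)
  have hν := hg.add_le_of_isMinOn_add
    (Q := fun z => ⟪w k, x (k + 1) - z⟫ + ρ / 2 * ‖z - x (k + 1)‖ ^ 2)
    (B := fun v => ρ / 2 * ‖v‖ ^ 2)
    (fun a b t => by
      simp only [inner_sub_right, inner_add_right, real_inner_smul_right,
        norm_sub_convexCombination_sq]
      ring)
    (Set.mem_univ _)
    (isMinOn_univ_iff.2 fun z => by
      simpa only [Pi.add_apply, add_assoc, norm_sub_rev (x (k + 1))] using hνup k z)
    (Set.mem_univ xs)
  have hw : ‖w (k + 1)‖ ^ 2 = ‖w k‖ ^ 2 + 2 * ρ * ⟪w k, x (k + 1) - ν (k + 1)⟫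
      + ρ ^ 2 * ‖x (k + 1) - ν (k + 1)‖ ^ 2 := by
    rw [hwup, norm_add_sq_real, real_inner_smul_right, norm_smul, Real.norm_of_nonneg hρ.le]
    ring
  have hinner : ⟪w k, xs - ν k⟫ + ⟪w k, x (k + 1) - xs⟫ = ⟪w k, x (k + 1) - ν k⟫ := by
    rw [← inner_add_right, sub_add_sub_cancel']
  rw [norm_sub_rev (ν (k + 1))] at hν
  have hA := hA1d k
  rw [← mul_le_mul_iff_right₀ hρ]
  field_simp
  linear_combination (2 * ρ) * (hx + hν + hA) + hw + (2 * ρ) * hinner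

/-- Per-step constraint-violation inequality for the online ADMM–EKF iterations. -/
theorem per_step_constraint_violation {n : ℕ}
    -- convex differentiable losses with gradient `f'`
    (f : ℕ → EuclideanSpace ℝ (Fin n) → ℝ)
    (f' : ℕ → EuclideanSpace ℝ (Fin n) → EuclideanSpace ℝ (Fin n))
    (hconv : ∀ k, ConvexOn ℝ Set.univ (f k))
    (hgrad : ∀ k z, HasGradientAt (f k) (f' k z) z)
    -- proper convex regularizer
    (g : EuclideanSpace ℝ (Fin n) → ℝ) (hg : ConvexOn ℝ Set.univ g)
    -- the (inverses of the) covariance matrices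
    (Pinv : ℕ → Matrix (Fin n) (Fin n) ℝ) (hP : ∀ k, (Pinv k).PosDef)
    (ρ η : ℝ) (hρ : 0 < ρ) (hη : 0 < η)
    -- the online ADMM–EKF iterates
    (x ν w : ℕ → EuclideanSpace ℝ (Fin n))
    (hν0 : ν 0 = x 0) (hw0 : w 0 = 0)
    (hxup : ∀ k, ∀ z : EuclideanSpace ℝ (Fin n),
      f k (x (k + 1)) + ⟪w k, x (k + 1) - ν k⟫ + ρ / 2 * ‖x (k + 1) - ν k‖ ^ 2
          + η / 2 * qnorm (Pinv k) (x (k + 1) - x k)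
        ≤ f k z + ⟪w k, z - ν k⟫ + ρ / 2 * ‖z - ν k‖ ^ 2
          + η / 2 * qnorm (Pinv k) (z - x k))
    (hνup : ∀ k, ∀ z : EuclideanSpace ℝ (Fin n),
      g (ν (k + 1)) + ⟪w k, x (k + 1) - ν (k + 1)⟫ + ρ / 2 * ‖x (k + 1) - ν (k + 1)‖ ^ 2
        ≤ g z + ⟪w k, x (k + 1) - z⟫ + ρ / 2 * ‖x (k + 1) - z‖ ^ 2)
    (hwup : ∀ k, w (k + 1) = w k + ρ • (x (k + 1) - ν (k + 1)))
    -- best solution in hindsight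
    (xs νs : EuclideanSpace ℝ (Fin n)) (hfeas : xs = νs)
    -- assumption A1.d
    (F : ℝ) (hF : 0 < F)
    (hA1d : ∀ k, -F ≤ f k (x (k + 1)) + g (ν (k + 1)) - (f k xs + g νs)) :
    ∀ k : ℕ,
      ‖x (k + 1) - ν k‖ ^ 2
        ≤ 2 * F / ρ + 1 / ρ ^ 2 * (‖w k‖ ^ 2 - ‖w (k + 1)‖ ^ 2)
          + (‖νs - ν k‖ ^ 2 - ‖νs - ν (k + 1)‖ ^ 2)
          + η / ρ * (qnorm (Pinv k) (xs - x k) - qnorm (Pinv k) (xs - x (k + 1))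
              - qnorm (Pinv k) (x (k + 1) - x k)) :=
  per_step_constraint_violation_general f hconv g hg Pinv ρ η hρ x ν w hxup hνup hwup xs νs hfeas F
    hA1d
end
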